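/- arXiv:1003.4829 — 2 statements merged into one kernel-verified Lean document; each statement's English description precedes it below -/
import Mathlib

section
/- Let Ω be a finite set with at least two elements, and let G be a solvable subgroup of Sym(Ω) acting primitively on Ω. Then G has exactly one minimal normal subgroup A (i.e., a nontrivial normal subgroup of G that properly contains no nontrivial normal subgroup of G), and this subgroup A is an elementary abelian p-group for some prime p: A is commutative and every element a of A satisfies a^p = 1. -/
/-!
A minimal normal subgroup `A` of a solvable group is abelian, since `⁅A, A⁆ < A` is again normal;
in a finite group it is then elementary abelian, because its elements of order dividing a prime
`p` form a nontrivial normal subgroup of `A`. In a primitive group the nontrivial normal subgroup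
`A` is transitive, and a transitive abelian permutation group is its own centralizer. A second
minimal normal subgroup `B ≠ A` would meet `A` trivially, hence centralize it, hence lie in `A`.
-/

/-- A group action is preprimitive if it is pretransitive and every block is trivial.
This matches Mathlib's `MulAction.IsPreprimitive`. -/
def IsPreprimitiveAction (G X : Type*) [Group G] [MulAction G X] : Prop :=
  MulAction.IsPretransitive G X ∧
    ∀ B : Set X, MulAction.IsBlock G B → MulAction.IsTrivialBlock B

/-- `A` is a minimal normal subgroup of `G`: it is nontrivial, normal, and the only normal
subgroup of `G` properly contained in it is the trivial one. -/
def IsMinimalNormal {G : Type*} [Group G] (A : Subgroup G) : Prop :=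
  A ≠ ⊥ ∧ A.Normal ∧ ∀ B : Subgroup G, B.Normal → B < A → B = ⊥

open MulAction Subgroup

namespace Subgroup

variable {G : Type*} [Group G]

def torsionBy (A : Subgroup G) [IsMulCommutative A] (n : ℕ) : Subgroup G where
  carrier := {a | a ∈ A ∧ a ^ n = 1}
  one_mem' := ⟨A.one_mem, one_pow n⟩
  mul_mem' := fun {_ _} ⟨ha, han⟩ ⟨hb, hbn⟩ =>
    ⟨A.mul_mem ha hb, by rw [Commute.mul_pow (setLike_mul_comm ha hb), han, hbn, one_mul]⟩
  inv_mem' := fun {_} ⟨ha, han⟩ => ⟨A.inv_mem ha, by rw [inv_pow, han, inv_one]⟩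

variable {A : Subgroup G} [IsMulCommutative A] {n : ℕ}

theorem torsionBy_le : A.torsionBy n ≤ A := fun _ ha => ha.1

instance torsionBy_normal [A.Normal] : (A.torsionBy n).Normal where
  conj_mem a ha g := ⟨‹A.Normal›.conj_mem a ha.1 g, by rw [conj_pow, ha.2, mul_one, mul_inv_cancel]⟩

end Subgroup

theorem exists_isMinimalNormal {G : Type*} [Group G] [Finite G] [Nontrivial G] :
    ∃ A : Subgroup G, IsMinimalNormal A := by
  obtain ⟨A, ⟨hA, hA₀⟩, hmin⟩ := (wellFounded_lt (α := Subgroup G)).has_min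
    {H : Subgroup G | H.Normal ∧ H ≠ ⊥} ⟨⊤, inferInstance, top_ne_bot⟩
  exact ⟨A, hA₀, hA, fun B hB hBA => by_contra fun hB₀ => hmin B ⟨hB, hB₀⟩ hBA⟩

namespace IsMinimalNormal

variable {G : Type*} [Group G] {A B : Subgroup G}

theorem eq_of_le (hA : IsMinimalNormal A) (hB : B.Normal) (hB₀ : B ≠ ⊥) (hBA : B ≤ A) : B = A :=
  hBA.eq_or_lt.resolve_right fun hlt => hB₀ (hA.2.2 B hB hlt)

theorem isMulCommutative [Group.IsSolvable G] (hA : IsMinimalNormal A) : IsMulCommutative A := by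
  have := hA.2.1
  have hcomm : ⁅A, A⁆ = ⊥ := hA.2.2 _ inferInstance (Group.IsSolvable.commutator_lt_of_ne_bot hA.1)
  exact le_centralizer_iff_isMulCommutative.mp (commutator_eq_bot_iff_le_centralizer.mp hcomm)

theorem exists_prime_pow_eq_one [Finite G] (hA : IsMinimalNormal A) [IsMulCommutative A] :
    ∃ p : ℕ, p.Prime ∧ ∀ a ∈ A, a ^ p = 1 := by
  have := hA.2.1
  obtain ⟨p, hp, hpA⟩ := Nat.exists_prime_and_dvd (mt card_eq_one.mp hA.1)
  have := Fact.mk hp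
  obtain ⟨g, hg⟩ := exists_prime_orderOf_dvd_card' p hpA
  have hg_mem : (g : G) ∈ A.torsionBy p :=
    ⟨g.2, by rw [← hg]; exact_mod_cast pow_orderOf_eq_one g⟩
  have htorsion_ne_bot : A.torsionBy p ≠ ⊥ := fun h => by
    have : g = 1 := Subtype.ext (by simpa [h] using hg_mem)
    exact hp.ne_one (hg ▸ this ▸ orderOf_one)
  have htorsion : A.torsionBy p = A := hA.eq_of_le inferInstance htorsion_ne_bot torsionBy_le
  exact ⟨p, hp, fun a ha => (htorsion.ge ha).2⟩

theorem eq_of_centralizer_le (hA : IsMinimalNormal A) (hcen : centralizer A ≤ A)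
    (hB : IsMinimalNormal B) : B = A := by
  have := hA.2.1
  have := hB.2.1
  by_cases hinf : B ⊓ A = ⊥
  · have hBA : B ≤ A := (commutator_eq_bot_iff_le_centralizer.mp
      (eq_bot_iff.mpr (hinf ▸ commutator_le_inf B A))).trans hcen
    exact absurd (hinf ▸ le_inf le_rfl hBA) (mt le_bot_iff.mp hB.1)
  · exact (hB.eq_of_le inferInstance hinf inf_le_left).symm.trans
      (hA.eq_of_le inferInstance hinf inf_le_right)

end IsMinimalNormal

theorem IsPreprimitiveAction.isPreprimitive {G X : Type*} [Group G] [MulAction G X]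
    (h : IsPreprimitiveAction G X) : IsPreprimitive G X :=
  { toIsPretransitive := h.1, isTrivialBlock_of_isBlock := h.2 _ }

theorem MulAction.IsPretransitive.nontrivial {M X : Type*} [Monoid M] [MulAction M X]
    [IsPretransitive M X] [Nontrivial X] : Nontrivial M := by
  obtain ⟨x, y, hxy⟩ := exists_pair_ne X
  obtain ⟨g, rfl⟩ := MulAction.exists_smul_eq M x y
  exact ⟨⟨g, 1, fun h => hxy (by rw [h, one_smul])⟩⟩

section Faithful

variable {G : Type*} (X : Type*) [Group G] [MulAction G X] [FaithfulSMul G X]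

theorem MulAction.IsPreprimitive.isPretransitive_of_normal_of_ne_bot [IsPreprimitive G X]
    {N : Subgroup G} [N.Normal] (hN : N ≠ ⊥) : IsPretransitive N X := by
  refine IsQuasiPreprimitive.isPretransitive_of_normal fun hfix => hN ?_
  refine (eq_bot_iff_forall N).mpr fun n hn => eq_of_smul_eq_smul (α := X) fun x => ?_
  have hx : x ∈ fixedPoints N X := hfix ▸ Set.mem_univ x
  exact (hx ⟨n, hn⟩).trans (one_smul G x).symm

/-- A permutation commuting with `A` is determined by the image of one point, which some element
of `A` already realises. -/
theorem MulAction.centralizer_le_of_isPretransitive [Nonempty X] {A : Subgroup G}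
    [IsMulCommutative A] [IsPretransitive A X] : centralizer A ≤ A := by
  intro b hb
  obtain ⟨x⟩ := ‹Nonempty X›
  obtain ⟨a, ha⟩ := exists_smul_eq A x (b • x)
  suffices b = a from this ▸ a.2
  refine eq_of_smul_eq_smul (α := X) fun z => ?_
  obtain ⟨c, rfl⟩ := exists_smul_eq A x z
  calc b • (c : G) • x = (c : G) • b • x := by rw [smul_smul, smul_smul, hb c c.2]
    _ = (c : G) • (a : G) • x := by rw [← ha]; rfl
    _ = (a : G) • (c : G) • x := by rw [smul_smul, smul_smul, setLike_mul_comm c.2 a.2]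

theorem IsMinimalNormal.centralizer_le [Group.IsSolvable G] [IsPreprimitive G X] [Nonempty X]
    {A : Subgroup G} (hA : IsMinimalNormal A) : centralizer A ≤ A := by
  have := hA.2.1
  have := hA.isMulCommutative
  have := IsPreprimitive.isPretransitive_of_normal_of_ne_bot X hA.1
  exact centralizer_le_of_isPretransitive X

end Faithful

/-- A solvable subgroup `G` of the symmetric group of a finite set `Ω` with at least two
elements, acting primitively on `Ω`, has exactly one minimal normal subgroup, and this
subgroup is an elementary abelian `p`-group for some prime `p`. -/
theorem solvable_primitive_unique_minimal_normal {Ω : Type*} [Fintype Ω]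
    (h2 : 2 ≤ Fintype.card Ω)
    (G : Subgroup (Equiv.Perm Ω)) (hsolv : IsSolvable G)
    (hprim : IsPreprimitiveAction G Ω) :
    (∃! A : Subgroup G, IsMinimalNormal A) ∧
      ∀ A : Subgroup G, IsMinimalNormal A →
        ∃ p : ℕ, p.Prime ∧ (∀ a b : G, a ∈ A → b ∈ A → a * b = b * a) ∧
          ∀ a : G, a ∈ A → a ^ p = 1 := by
  have : Group.IsSolvable G := hsolv
  have := hprim.isPreprimitive
  have : Nontrivial Ω := Fintype.one_lt_card_iff_nontrivial.mp h2
  have : Nontrivial G := IsPretransitive.nontrivial (X := Ω)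
  obtain ⟨A, hA⟩ := exists_isMinimalNormal (G := G)
  refine ⟨⟨A, hA, fun B hB => hA.eq_of_centralizer_le (hA.centralizer_le Ω) hB⟩, fun A hA => ?_⟩
  have := hA.isMulCommutative
  obtain ⟨p, hp, hpow⟩ := hA.exists_prime_pow_eq_one
  exact ⟨p, hp, fun a b ha hb => setLike_mul_comm ha hb, hpow⟩
end

section
/- Let G be a solvable subgroup of the symmetric group of a 5-element set Ω, acting primitively on Ω. Then there exists a bijection e : Ω ≃ ZMod 5 such that every g ∈ G acts as an affinity of ZMod 5: for each g ∈ G there exist a unit a ∈ (ZMod 5)ˣ and b ∈ ZMod 5 with e(g(x)) = a·e(x) + b for all x ∈ Ω. -/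
open Function MulAction Multiplicative

theorem Group.IsSolvable.exists_normal_isMulCommutative_ne_bot {G : Type*} [Group G]
    [Group.IsSolvable G] [Nontrivial G] :
    ∃ N : Subgroup G, N.Normal ∧ N ≠ ⊥ ∧ IsMulCommutative N := by
  classical
  have hex : ∃ n, derivedSeries G n = ⊥ := Group.IsSolvable.solvable
  obtain ⟨m, hm⟩ : ∃ m, Nat.find hex = m + 1 := by
    refine Nat.exists_eq_succ_of_ne_zero fun h => top_ne_bot (α := Subgroup G) ?_
    simpa [h, derivedSeries_zero] using Nat.find_spec hex
  refine ⟨derivedSeries G m, derivedSeries_normal G m, Nat.find_min hex (by omega), ?_⟩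
  rw [← Subgroup.commutator_self_eq_bot_iff, ← derivedSeries_succ, ← hm]
  exact Nat.find_spec hex

theorem ZMod.exists_unit_mul_add_of_map_add_one {n : ℕ} {h : ZMod n → ZMod n}
    (hsurj : Surjective h) {k : ZMod n} (hk : ∀ y, h (y + 1) = h y + k) :
    ∃ a : (ZMod n)ˣ, ∀ y, h y = a * y + h 0 := by
  have hint : ∀ i : ℤ, h i = k * i + h 0 := by
    intro i
    induction i using Int.induction_on with
    | zero => simp
    | succ i ih => push_cast at ih ⊢; rw [hk, ih]; ring
    | pred i ih =>
      have := hk ((-(i : ℤ) - 1 : ℤ))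
      push_cast at ih this ⊢
      rw [sub_add_cancel, ih] at this
      linear_combination -this
  have hlin : ∀ y, h y = k * y + h 0 := fun y => by simpa using hint y.cast
  obtain ⟨y, hy⟩ := hsurj (1 + h 0)
  exact ⟨Units.mkOfMulEqOne k y (by linear_combination (hy.symm.trans (hlin y)).symm), hlin⟩

namespace MulAction

variable {G X : Type*} [Group G] [MulAction G X]

theorem IsPreprimitive.isPretransitive_of_normal_ne_bot [FaithfulSMul G X] [IsPreprimitive G X]
    {N : Subgroup G} [N.Normal] (hN : N ≠ ⊥) : IsPretransitive N X := by
  refine IsQuasiPreprimitive.isPretransitive_of_normal fun hfix => hN ?_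
  refine (Subgroup.eq_bot_iff_forall N).mpr fun g hg => eq_of_smul_eq_smul (α := X) fun x => ?_
  have hx : x ∈ fixedPoints N X := hfix ▸ Set.mem_univ x
  simpa using hx ⟨g, hg⟩

theorem bijective_smul_of_isMulCommutative [IsMulCommutative G] [FaithfulSMul G X]
    [IsPretransitive G X] (x₀ : X) : Bijective fun g : G => g • x₀ := by
  refine ⟨fun g h (hgh : g • x₀ = h • x₀) => eq_of_smul_eq_smul (α := X) fun x => ?_,
    exists_smul_eq G x₀⟩
  obtain ⟨t, rfl⟩ := exists_smul_eq G x₀ x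
  rw [smul_smul, mul_comm' g, mul_smul, hgh, ← mul_smul, mul_comm' t, mul_smul]

end MulAction

section ZModCoord

variable {N X : Type*} [Group N] [MulAction N X] {n : ℕ} (ψ : Multiplicative (ZMod n) ≃* N)
  {x₀ : X} (hx₀ : Bijective fun c : N => c • x₀)

noncomputable def zmodCoord : X ≃ ZMod n :=
  (Equiv.ofBijective (fun i : ZMod n => ψ (ofAdd i) • x₀)
    (hx₀.comp (ψ.bijective.comp ofAdd.bijective))).symm

theorem zmodCoord_symm_apply (i : ZMod n) :
    (zmodCoord ψ hx₀).symm i = ψ (ofAdd i) • x₀ :=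
  rfl

theorem zmodCoord_symm_add (a i : ZMod n) :
    (zmodCoord ψ hx₀).symm (a + i) = ψ (ofAdd a) • (zmodCoord ψ hx₀).symm i := by
  rw [zmodCoord_symm_apply, zmodCoord_symm_apply, smul_smul, ← map_mul, ofAdd_add]

theorem zmodCoord_smul (a : ZMod n) (x : X) :
    zmodCoord ψ hx₀ (ψ (ofAdd a) • x) = a + zmodCoord ψ hx₀ x := by
  rw [← Equiv.eq_symm_apply, zmodCoord_symm_add, Equiv.symm_apply_apply]

end ZModCoord

theorem exists_unit_mul_add_zmodCoord {G X : Type*} [Group G] [MulAction G X] {N : Subgroup G}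
    [N.Normal] {n : ℕ} (ψ : Multiplicative (ZMod n) ≃* N) {x₀ : X}
    (hx₀ : Bijective fun c : N => c • x₀) (g : G) :
    ∃ (a : (ZMod n)ˣ) (b : ZMod n),
      ∀ x, zmodCoord ψ hx₀ (g • x) = a * zmodCoord ψ hx₀ x + b := by
  set e := zmodCoord ψ hx₀
  set k := toAdd (ψ.symm (MulAut.conjNormal g (ψ (ofAdd 1))))
  have hconj : ∀ x : X, g • ψ (ofAdd 1) • x = ψ (ofAdd k) • g • x := by
    intro x
    simp only [k, ofAdd_toAdd, MulEquiv.apply_symm_apply, Subgroup.smul_def,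
      MulAut.conjNormal_apply, smul_smul, inv_mul_cancel_right]
  have hstep : ∀ y, e (g • e.symm (y + 1)) = e (g • e.symm y) + k := by
    intro y
    rw [add_comm y, zmodCoord_symm_add, hconj, zmodCoord_smul, add_comm]
  have hsurj : Surjective fun y => e (g • e.symm y) :=
    e.surjective.comp ((MulAction.bijective g).surjective.comp e.symm.surjective)
  obtain ⟨a, ha⟩ := ZMod.exists_unit_mul_add_of_map_add_one hsurj hstep
  exact ⟨a, _, fun x => by simpa using ha (e x)⟩

theorem MulAction.IsPreprimitive.exists_equiv_zmod_affine {G X : Type*} [Group G] [MulAction G X]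
    [FaithfulSMul G X] [Group.IsSolvable G] [IsPreprimitive G X] {p : ℕ} [Fact p.Prime]
    (hX : Nat.card X = p) :
    ∃ e : X ≃ ZMod p, ∀ g : G, ∃ (a : (ZMod p)ˣ) (b : ZMod p),
      ∀ x, e (g • x) = a * e x + b := by
  have : Finite X := Nat.finite_of_card_ne_zero (hX ▸ (Fact.out : p.Prime).ne_zero)
  have : Nontrivial X := Finite.one_lt_card_iff_nontrivial.mp (hX ▸ (Fact.out : p.Prime).one_lt)
  obtain ⟨x₀⟩ : Nonempty X := inferInstance
  have : Nontrivial G := by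
    obtain ⟨y, hy⟩ := exists_ne x₀
    obtain ⟨g, rfl⟩ := exists_smul_eq G x₀ y
    exact nontrivial_of_ne g 1 fun hg => hy (by rw [hg, one_smul])
  obtain ⟨N, hN, hN_ne, hN_comm⟩ :=
    Group.IsSolvable.exists_normal_isMulCommutative_ne_bot (G := G)
  have := IsPreprimitive.isPretransitive_of_normal_ne_bot (X := X) hN_ne
  have hx₀ := bijective_smul_of_isMulCommutative (G := N) x₀
  have hcard : Nat.card N = p := (Nat.card_eq_of_bijective _ hx₀).trans hX
  have := isCyclic_of_prime_card hcard
  obtain ⟨c, hc⟩ := IsCyclic.exists_generator (α := N)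
  exact ⟨_, exists_unit_mul_add_zmodCoord (zmodMulEquivOfGenerator hc hcard) hx₀⟩

/-- Let `G` be a solvable subgroup of the symmetric group of a `5`-element set `Ω`, acting
primitively on `Ω`. Then there is a bijection `e : Ω ≃ ZMod 5` through which every `g ∈ G`
acts as an affinity `x ↦ a * x + b` with `a ∈ (ZMod 5)ˣ` and `b ∈ ZMod 5`. -/
theorem solvable_primitive_degree_five_acts_affinely {Ω : Type*} [Fintype Ω]
    (hΩ : Fintype.card Ω = 5)
    (G : Subgroup (Equiv.Perm Ω)) (hsolv : IsSolvable G)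
    (hprim : IsPreprimitiveAction G Ω) :
    ∃ e : Ω ≃ ZMod 5, ∀ g : G, ∃ (a : (ZMod 5)ˣ) (b : ZMod 5),
      ∀ x : Ω, e ((g : Equiv.Perm Ω) x) = (a : ZMod 5) * e x + b := by
  have : Group.IsSolvable G := hsolv
  have : Fact (Nat.Prime 5) := ⟨by norm_num⟩
  have : IsPreprimitive G Ω := { hprim.1 with isTrivialBlock_of_isBlock := hprim.2 _ }
  exact IsPreprimitive.exists_equiv_zmod_affine (Nat.card_eq_fintype_card.trans hΩ)
end
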